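/- arXiv:0812.2613 — 5 statements merged into one kernel-verified Lean document; each statement's English description precedes it below -/
import Mathlib

section
/- Let V be an n-dimensional vector space over a field of characteristic zero and let B₁, …, B_k be bases of V. Then |B₁* + ⋯ + B_k*| ≥ (k+1)^n. -/
/-
In coordinates adapted to a basis B, the subset sums B* form the cube {0,1}ⁿ, so by induction on k
it suffices to prove the discrete Brunn–Minkowski inequality |A + {0,1}ⁿ| ≥ (|A|^{1/n} + 1)ⁿ for
nonempty A ⊆ Rⁿ, R of characteristic zero. Induct on n, slicing A along the first coordinate into
fibres A_t. The set A_t + {0,1}ⁿ⁻¹ lies in both slices t and t + 1 of A + {0,1}ⁿ; shifting the ray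
t₀ + ℕ by one gives an injective choice of one of these slices for each t that leaves slice t₀
free, so the largest fibre A_{t₀} is counted twice. With x_t = |A_t|^{1/(n-1)} the induction
hypothesis bounds slice t by (x_t + 1)ⁿ⁻¹, and convexity of x ↦ xⁿ finishes the estimate.
-/

open Finset Pointwise

def subsetSums {V : Type*} [AddCommMonoid V] [DecidableEq V] (B : Finset V) : Finset V :=
  B.powerset.image fun A => A.sum id

lemma add_one_pow_succ_mul_pow_le (n : ℕ) {r s : ℝ} (hr : 0 ≤ r) (hs : 0 < s) :
    (r + 1) ^ (n + 1) * s ^ n ≤ (s + 1) ^ n * (r ^ (n + 1) + s ^ n) := by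
  have hs1 : 0 < s + 1 := by linarith
  have h := (convexOn_pow (n + 1)).2 (Set.mem_Ici.2 hr) (Set.mem_Ici.2 hs.le)
    (div_nonneg hs.le hs1.le) (div_nonneg zero_le_one hs1.le) (by field_simp)
  simp only [smul_eq_mul] at h
  rw [show s / (s + 1) * r + 1 / (s + 1) * s = s * (r + 1) / (s + 1) by ring, div_pow, mul_pow,
    div_le_iff₀ (by positivity)] at h
  have : s * ((r + 1) ^ (n + 1) * s ^ n) ≤ s * ((s + 1) ^ n * (r ^ (n + 1) + s ^ n)) := by
    calc s * ((r + 1) ^ (n + 1) * s ^ n) = s ^ (n + 1) * (r + 1) ^ (n + 1) := by ring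
      _ ≤ _ := h
      _ = _ := by field_simp; ring
  exact le_of_mul_le_mul_left this hs

lemma add_one_pow_succ_le_sum_add_one_pow {ι : Type*} (n : ℕ) (L : Finset ι) {x : ι → ℝ}
    {r s : ℝ} (hr : 0 ≤ r) (hs : 0 < s) (hx : ∀ t ∈ L, 0 ≤ x t) (hxs : ∀ t ∈ L, x t ≤ s)
    (hrx : r ^ (n + 1) ≤ ∑ t ∈ L, x t ^ n) :
    (r + 1) ^ (n + 1) ≤ ∑ t ∈ L, (x t + 1) ^ n + (s + 1) ^ n := by
  have hterm : ∀ t ∈ L, (s + 1) ^ n * x t ^ n ≤ s ^ n * (x t + 1) ^ n := fun t ht => by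
    rw [← mul_pow, ← mul_pow]
    exact pow_le_pow_left₀ (mul_nonneg (by linarith) (hx t ht)) (by nlinarith [hxs t ht]) n
  refine le_of_mul_le_mul_right ?_ (pow_pos hs n)
  calc (r + 1) ^ (n + 1) * s ^ n ≤ (s + 1) ^ n * (r ^ (n + 1) + s ^ n) :=
        add_one_pow_succ_mul_pow_le n hr hs
    _ ≤ (s + 1) ^ n * (∑ t ∈ L, x t ^ n + s ^ n) := by gcongr
    _ = ∑ t ∈ L, (s + 1) ^ n * x t ^ n + s ^ n * (s + 1) ^ n := by rw [mul_add, mul_sum]; ring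
    _ ≤ ∑ t ∈ L, s ^ n * (x t + 1) ^ n + s ^ n * (s + 1) ^ n := by
        gcongr ?_ + _; exact sum_le_sum hterm
    _ = (∑ t ∈ L, (x t + 1) ^ n + (s + 1) ^ n) * s ^ n := by rw [← mul_sum]; ring

section Cube

variable (R : Type*) [Zero R] [One R] [DecidableEq R]

def cube (ι : Type*) [Fintype ι] [DecidableEq ι] : Finset (ι → R) :=
  Fintype.piFinset fun _ => {0, 1}

variable {R}

lemma mem_cube {ι : Type*} [Fintype ι] [DecidableEq ι] {x : ι → R} :
    x ∈ cube R ι ↔ ∀ i, x i = 0 ∨ x i = 1 := by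
  simp [cube]

lemma cons_mem_cube {n : ℕ} {d : R} {q : Fin n → R} :
    Matrix.vecCons d q ∈ cube R (Fin (n + 1)) ↔
      (d = 0 ∨ d = 1) ∧ q ∈ cube R (Fin n) := by
  simp [mem_cube, Fin.forall_fin_succ]

end Cube

lemma Matrix.cons_tail_of_zero_eq {α : Type*} {n : ℕ} {x : Fin (n + 1) → α} {t : α}
    (h : x 0 = t) : Matrix.vecCons t (Matrix.vecTail x) = x := by
  rw [← h]; exact Matrix.cons_head_tail x

section Fiber

variable {R : Type*} [DecidableEq R] {n : ℕ}

def fiber (A : Finset (Fin (n + 1) → R)) (t : R) : Finset (Fin n → R) :=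
  {x ∈ A | x 0 = t}.image Matrix.vecTail

@[simp]
lemma mem_fiber {A : Finset (Fin (n + 1) → R)} {t : R} {x : Fin n → R} :
    x ∈ fiber A t ↔ Matrix.vecCons t x ∈ A := by
  simp only [fiber, mem_image, mem_filter]
  constructor
  · rintro ⟨y, ⟨hy, rfl⟩, rfl⟩
    rwa [Matrix.cons_tail_of_zero_eq rfl]
  · intro hx
    exact ⟨_, ⟨hx, rfl⟩, Matrix.tail_cons _ _⟩

lemma card_fiber (A : Finset (Fin (n + 1) → R)) (t : R) :
    #(fiber A t) = #{x ∈ A | x 0 = t} := by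
  refine card_image_of_injOn fun x hx y hy hxy => ?_
  rw [mem_coe, mem_filter] at hx hy
  rw [← Matrix.cons_tail_of_zero_eq hx.2, ← Matrix.cons_tail_of_zero_eq hy.2, hxy]

lemma card_eq_sum_card_fiber (A : Finset (Fin (n + 1) → R)) :
    #A = ∑ t ∈ A.image (· 0), #(fiber A t) := by
  simp only [card_fiber]
  exact card_eq_sum_card_image _ A

lemma sum_card_fiber_le (A : Finset (Fin (n + 1) → R)) (K : Finset R) :
    ∑ t ∈ K, #(fiber A t) ≤ #A := by
  simp only [card_fiber, sum_card_fiberwise_eq_card_filter]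
  exact card_filter_le _ _

lemma fiber_nonempty {A : Finset (Fin (n + 1) → R)} {t : R} (ht : t ∈ A.image (· 0)) :
    (fiber A t).Nonempty := by
  obtain ⟨x, hx, rfl⟩ := mem_image.1 ht
  exact ⟨Matrix.vecTail x, by rwa [mem_fiber, Matrix.cons_tail_of_zero_eq rfl]⟩

end Fiber

lemma exists_injective_shift_not_mem_range {R : Type*} [AddGroupWithOne R] [CharZero R] (t₀ : R) :
    ∃ σ : R → R, Function.Injective σ ∧ (∀ t, σ t = t ∨ σ t = t + 1) ∧ ∀ t, σ t ≠ t₀ := by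
  classical
  set ray : R → Prop := fun t => ∃ m : ℕ, t = t₀ + m
  have ray_succ : ∀ t, ray t → ray (t + 1) := by
    rintro t ⟨m, rfl⟩; exact ⟨m + 1, by push_cast; rw [add_assoc]⟩
  refine ⟨fun t => if ray t then t + 1 else t, fun u v huv => ?_, fun t => ?_, fun t => ?_⟩
  · by_cases hu : ray u <;> by_cases hv : ray v <;> simp only [hu, hv, if_true, if_false] at huv
    · exact add_right_cancel huv
    · exact absurd (huv ▸ ray_succ u hu) hv
    · exact absurd (huv ▸ ray_succ v hv) hu
    · exact huv
  · by_cases ht : ray t <;> simp [ht]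
  · by_cases ht : ray t <;> simp only [ht, if_true, if_false]
    · obtain ⟨m, rfl⟩ := ht
      intro h
      rw [add_assoc, add_eq_left, ← Nat.cast_add_one, Nat.cast_eq_zero] at h
      exact m.succ_ne_zero h
    · rintro rfl; exact ht ⟨0, by simp⟩

section AddCube

variable {R : Type*} [AddCommGroupWithOne R] [DecidableEq R] {n : ℕ}

lemma fiber_add_cube_subset (A : Finset (Fin (n + 1) → R)) {t d : R} (hd : d = 0 ∨ d = 1) :
    fiber A t + cube R (Fin n) ⊆ fiber (A + cube R (Fin (n + 1))) (t + d) := by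
  intro z hz
  obtain ⟨x, hx, q, hq, rfl⟩ := mem_add.1 hz
  rw [mem_fiber, ← Matrix.cons_add_cons]
  exact add_mem_add (mem_fiber.1 hx) (cons_mem_cube.2 ⟨hd, hq⟩)

variable [CharZero R]

lemma sum_card_fiber_add_cube_le (A : Finset (Fin (n + 1) → R)) (L : Finset R) (t₀ : R) :
    ∑ t ∈ L, #(fiber A t + cube R (Fin n)) + #(fiber A t₀ + cube R (Fin n)) ≤
      #(A + cube R (Fin (n + 1))) := by
  obtain ⟨σ, hσ, hσ_shift, hσ_ne⟩ := exists_injective_shift_not_mem_range t₀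
  set S := A + cube R (Fin (n + 1))
  have hσ_le : ∀ t, #(fiber A t + cube R (Fin n)) ≤ #(fiber S (σ t)) := fun t => by
    rcases hσ_shift t with h | h <;> rw [h]
    · simpa using card_le_card (fiber_add_cube_subset A (t := t) (Or.inl rfl))
    · exact card_le_card (fiber_add_cube_subset A (Or.inr rfl))
  have ht₀_le : #(fiber A t₀ + cube R (Fin n)) ≤ #(fiber S t₀) := by
    simpa using card_le_card (fiber_add_cube_subset A (t := t₀) (Or.inl rfl))
  have ht₀ : t₀ ∉ L.image σ := by
    simp only [mem_image, not_exists, not_and]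
    exact fun t _ => hσ_ne t
  calc ∑ t ∈ L, #(fiber A t + cube R (Fin n)) + #(fiber A t₀ + cube R (Fin n))
      ≤ ∑ t ∈ L, #(fiber S (σ t)) + #(fiber S t₀) :=
        add_le_add (sum_le_sum fun t _ => hσ_le t) ht₀_le
    _ = ∑ s ∈ insert t₀ (L.image σ), #(fiber S s) := by
      rw [sum_insert ht₀, sum_image hσ.injOn, add_comm]
    _ ≤ #S := sum_card_fiber_le S _

end AddCube

theorem add_one_pow_le_card_add_cube {R : Type*} [AddCommGroupWithOne R] [CharZero R]
    [DecidableEq R] (n : ℕ) (A : Finset (Fin n → R)) (hA : A.Nonempty) {r : ℝ} (hr : 0 ≤ r)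
    (hrA : r ^ n ≤ #A) : (r + 1) ^ n ≤ #(A + cube R (Fin n)) := by
  induction n generalizing r with
  | zero => simpa using (hA.add (s := A) (t := cube R (Fin 0)) ⟨0, by simp [mem_cube]⟩).card_pos
  | succ n ih =>
    set L := A.image (· 0)
    have hfiber : ∀ t ∈ L, (fiber A t).Nonempty := fun t ht => fiber_nonempty ht
    obtain ⟨t₀, ht₀, ht₀_max⟩ := L.exists_max_image (fun t => #(fiber A t)) (hA.image _)
    -- for `n = 0` this is `1` (as `(0 : ℝ)⁻¹ = 0`), matching fibres in the one-point `Fin 0 → R`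
    set x : R → ℝ := fun t => (#(fiber A t) : ℝ) ^ ((n : ℝ)⁻¹)
    have hx_pow : ∀ t ∈ L, x t ^ n = #(fiber A t) := fun t ht => by
      rcases n.eq_zero_or_pos with rfl | hn
      · rw [pow_zero]
        exact_mod_cast (le_antisymm (card_le_one_of_subsingleton _) (hfiber t ht).card_pos).symm
      · exact Real.rpow_inv_natCast_pow (Nat.cast_nonneg _) hn.ne'
    have hx_le : ∀ t ∈ L, x t ≤ x t₀ := fun t ht =>
      Real.rpow_le_rpow (Nat.cast_nonneg _) (Nat.cast_le.2 (ht₀_max t ht)) (by positivity)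
    have hx_pos : 0 < x t₀ := Real.rpow_pos_of_pos (Nat.cast_pos.2 (hfiber t₀ ht₀).card_pos) _
    have hsum : r ^ (n + 1) ≤ ∑ t ∈ L, x t ^ n := by
      rw [sum_congr rfl hx_pow, ← Nat.cast_sum, ← card_eq_sum_card_fiber]
      exact hrA
    have hfiber_add : ∀ t ∈ L, (x t + 1) ^ n ≤ #(fiber A t + cube R (Fin n)) := fun t ht =>
      ih _ (hfiber t ht) (by positivity) (hx_pow t ht).le
    calc (r + 1) ^ (n + 1) ≤ ∑ t ∈ L, (x t + 1) ^ n + (x t₀ + 1) ^ n :=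
          add_one_pow_succ_le_sum_add_one_pow n L hr hx_pos (fun t _ => by positivity) hx_le hsum
      _ ≤ ∑ t ∈ L, (#(fiber A t + cube R (Fin n)) : ℝ) + #(fiber A t₀ + cube R (Fin n)) :=
          add_le_add (sum_le_sum hfiber_add) (hfiber_add t₀ ht₀)
      _ ≤ #(A + cube R (Fin (n + 1))) := by
          exact_mod_cast sum_card_fiber_add_cube_le A L t₀

section Basis

variable {F V : Type*} [Field F] [AddCommGroup V] [Module F V]

lemma Module.Basis.equivFun_sum_self {ι : Type*} [Fintype ι] [DecidableEq ι]
    (b : Module.Basis ι F V) (J : Finset ι) :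
    b.equivFun (∑ i ∈ J, b i) = fun j => if j ∈ J then 1 else 0 := by
  ext j
  simp [map_sum, Finsupp.single_apply]

lemma Module.Basis.image_equivFun_subsetSums [DecidableEq F] [DecidableEq V] {ι : Type*}
    [Fintype ι] [DecidableEq ι] (b : Module.Basis ι F V) :
    (subsetSums (univ.image b)).image b.equivFun = cube F ι := by
  ext y
  simp only [subsetSums, powerset_image, image_image, mem_image, mem_powerset, subset_univ,
    true_and, Function.comp_def, sum_image b.injective.injOn, id, b.equivFun_sum_self, mem_cube]
  constructor
  · rintro ⟨J, rfl⟩ j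
    by_cases hj : j ∈ J <;> simp [hj]
  · intro hy
    refine ⟨({j | y j = 1} : Finset ι), funext fun j => ?_⟩
    rcases hy j with h | h <;> simp [h]

lemma exists_basis_fin_image_eq [DecidableEq V] {n : ℕ} (hV : Module.finrank F V = n)
    (B : Finset V)
    (hli : LinearIndependent F ((↑) : ↥(B : Set V) → V)) (hsp : Submodule.span F (B : Set V) = ⊤) :
    ∃ c : Module.Basis (Fin n) F V, univ.image c = B := by
  let b := Module.Basis.mk hli (by rw [Subtype.range_coe, hsp])
  have hcard : Fintype.card ↥(B : Set V) = n := by rw [← hV, Module.finrank_eq_card_basis b]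
  refine ⟨b.reindex (Fintype.equivFinOfCardEq hcard), coe_injective ?_⟩
  rw [coe_image, coe_univ, Set.image_univ, Module.Basis.range_reindex, Module.Basis.coe_mk,
    Subtype.range_coe]

lemma add_one_pow_le_card_add_subsetSums [CharZero F] [DecidableEq V] {n : ℕ}
    (hV : Module.finrank F V = n) (B : Finset V)
    (hli : LinearIndependent F ((↑) : ↥(B : Set V) → V)) (hsp : Submodule.span F (B : Set V) = ⊤)
    {X : Finset V} (hX : X.Nonempty) {m : ℕ} (hm : m ^ n ≤ #X) :
    (m + 1) ^ n ≤ #(X + subsetSums B) := by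
  classical
  obtain ⟨c, rfl⟩ := exists_basis_fin_image_eq hV B hli hsp
  have hφ := c.equivFun.injective
  have h := add_one_pow_le_card_add_cube n (X.image c.equivFun) (hX.image _) (Nat.cast_nonneg m)
    (r := m) (by rw [card_image_of_injective _ hφ]; exact_mod_cast hm)
  rw [← c.image_equivFun_subsetSums, ← image_add, card_image_of_injective _ hφ] at h
  exact_mod_cast h

end Basis

theorem stmt8 {F V : Type*} [Field F] [CharZero F] [AddCommGroup V] [Module F V]
    [DecidableEq V] (n : ℕ) (hV : Module.finrank F V = n)
    (k : ℕ) (B : Fin k → Finset V)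
    (hB : ∀ i, LinearIndependent F ((↑) : ↥(B i : Set V) → V) ∧
            Submodule.span F ((B i : Set V)) = ⊤) :
    (k + 1) ^ n ≤ (∑ i, subsetSums (B i)).card := by
  induction k with
  | zero => simp
  | succ k ih =>
    have hinit := ih (fun i => B i.castSucc) (fun i => hB i.castSucc)
    rw [Fin.sum_univ_castSucc]
    exact add_one_pow_le_card_add_subsetSums hV _ (hB _).1 (hB _).2
      (card_pos.1 (lt_of_lt_of_le (by positivity) hinit)) hinit
end

section
/- Let B = {b₁, …, b_n} be a linearly independent set in a vector space over a field of characteristic 0 or of odd characteristic, and let B* be its subset-sum set. Then the number of additive quadruples T(B*) = |{(x₁,x₂,x₃,x₄) ∈ (B*)⁴ : x₁ + x₂ = x₃ + x₄}| equals 6^n. -/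
open Finset Pointwise

/-- The number of additive quadruples of `X`: tuples `(x₁,x₂,x₃,x₄) ∈ X⁴`
with `x₁ + x₂ = x₃ + x₄`. -/
def addQuadruples {G : Type*} [AddCommGroup G] [DecidableEq G] (X : Finset G) : ℕ :=
  (((X ×ˢ X) ×ˢ (X ×ˢ X)).filter fun p => p.1.1 + p.1.2 = p.2.1 + p.2.2).card

/-- The 6-element set of admissible boolean quadruples. -/
def T6 : Finset (Bool × Bool × Bool × Bool) :=
  Finset.univ.filter fun t =>
    (if t.1 then 1 else 0) + (if t.2.1 then 1 else 0)
      = (if t.2.2.1 then 1 else 0) + (if t.2.2.2 then (1:ℕ) else 0)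

lemma T6_card : T6.card = 6 := by decide

section
variable {F V : Type*} [Field F] [AddCommGroup V] [Module F V] [DecidableEq V]

lemma sum_eq_indic (B A : Finset V) (h : A ⊆ B) :
    ∑ b ∈ B, (if b ∈ A then (1:F) else 0) • b = A.sum id := by
  simp only [ite_smul, one_smul, zero_smul]
  rw [Finset.sum_ite_mem, Finset.inter_eq_right.mpr h]
  simp

set_option linter.unusedSectionVars false in
lemma coeff_eq {B : Finset V} (hB : LinearIndependent F ((↑) : ↥(B : Set V) → V))
    {f g : V → F} (h : ∑ b ∈ B, f b • b = ∑ b ∈ B, g b • b) :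
    ∀ b ∈ B, f b = g b := by
  intro b hb
  have h0 : ∑ b ∈ B, (f b - g b) • b = 0 := by
    simp only [sub_smul, Finset.sum_sub_distrib, h, sub_self]
  have hs : ∑ i : ↥(B : Set V), (f i - g i) • (i : V) = 0 := by
    rw [show (∑ i : ↥(B : Set V), (f i - g i) • (i : V))
        = ∑ b ∈ B, (f b - g b) • b from by
      rw [← Finset.sum_coe_sort B (fun b => (f b - g b) • b)]; rfl]
    exact h0
  have := linearIndependent_iff'.mp hB Finset.univ (fun i => f i - g i) hs
    ⟨b, Finset.mem_coe.mpr hb⟩ (Finset.mem_univ _)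
  exact sub_eq_zero.mp this

lemma sum_injOn {B : Finset V} (hB : LinearIndependent F ((↑) : ↥(B : Set V) → V))
    {A C : Finset V} (hA : A ⊆ B) (hC : C ⊆ B) (h : A.sum id = C.sum id) : A = C := by
  have hco : ∀ b ∈ B, (if b ∈ A then (1:F) else 0) = (if b ∈ C then 1 else 0) :=
    coeff_eq hB (by rw [sum_eq_indic B A hA, sum_eq_indic B C hC, h])
  ext b
  constructor
  · intro hb
    have := hco b (hA hb)
    by_contra hbc
    simp [hb, hbc] at this
  · intro hb
    have := hco b (hC hb)
    by_contra hbc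
    simp [hb, hbc] at this

lemma key_char {F : Type*} [Field F] (h2 : (2:F) ≠ 0) (p q r s : Prop) [Decidable p]
    [Decidable q] [Decidable r] [Decidable s] :
    ((if p then (1:F) else 0) + (if q then 1 else 0)
      = (if r then 1 else 0) + (if s then 1 else 0)) ↔
    ((if p then (1:ℕ) else 0) + (if q then 1 else 0)
      = (if r then 1 else 0) + (if s then 1 else 0)) := by
  have h1 : (1:F) ≠ 0 := one_ne_zero
  have h11 : (1:F) + 1 ≠ 0 := by rw [one_add_one_eq_two]; exact h2
  have h110 : (1:F) + 1 ≠ 1 := by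
    intro h; exact h1 (by linear_combination h)
  have h11' : ¬(0:F) = 1 + 1 := fun h => h11 h.symm
  by_cases hp : p <;> by_cases hq : q <;> by_cases hr : r <;> by_cases hs : s <;>
    simp_all
end

set_option maxHeartbeats 1000000 in
theorem stmt11 {F V : Type*} [Field F] (hF : ringChar F ≠ 2)
    [AddCommGroup V] [Module F V] [DecidableEq V]
    (B : Finset V) (n : ℕ) (hn : B.card = n)
    (hB : LinearIndependent F ((↑) : ↥(B : Set V) → V)) :
    addQuadruples (subsetSums B) = 6 ^ n := by
  classical
  subst hn
  have h2 : (2:F) ≠ 0 := Ring.two_ne_zero hF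
  -- selected subsets from a boolean-quadruple labelling
  let k₁ : Bool × Bool × Bool × Bool → Bool := fun t => t.1
  let k₂ : Bool × Bool × Bool × Bool → Bool := fun t => t.2.1
  let k₃ : Bool × Bool × Bool × Bool → Bool := fun t => t.2.2.1
  let k₄ : Bool × Bool × Bool × Bool → Bool := fun t => t.2.2.2
  let sel : (Bool × Bool × Bool × Bool → Bool) → (∀ a ∈ B, Bool × Bool × Bool × Bool) → Finset V :=
    fun k f => (B.attach.filter fun b => k (f b.1 b.2) = true).map
      ⟨Subtype.val, Subtype.val_injective⟩
  have sel_mem : ∀ k f b, b ∈ sel k f ↔ ∃ hb : b ∈ B, k (f b hb) = true := by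
    intro k f b
    simp only [sel, Finset.mem_map, Finset.mem_filter, Finset.mem_attach, true_and,
      Function.Embedding.coeFn_mk, Subtype.exists]
    constructor
    · rintro ⟨a, ha, hk, rfl⟩; exact ⟨ha, hk⟩
    · rintro ⟨hb, hk⟩; exact ⟨b, hb, hk, rfl⟩
  have sel_sub : ∀ k f, sel k f ⊆ B := by
    intro k f b hb
    obtain ⟨h, -⟩ := (sel_mem k f b).mp hb
    exact h
  have sel_indN : ∀ k f b (hb : b ∈ B),
      (if b ∈ sel k f then (1:ℕ) else 0) = if k (f b hb) then 1 else 0 := by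
    intro k f b hb
    by_cases hk : k (f b hb) = true
    · rw [if_pos ((sel_mem k f b).mpr ⟨hb, hk⟩), if_pos hk]
    · rw [if_neg (fun h => hk (let ⟨h', hk'⟩ := (sel_mem k f b).mp h; hk')), if_neg hk]
  -- pair sums as coefficient sums
  have sum_pair : ∀ (A C : Finset V), A ⊆ B → C ⊆ B →
      A.sum id + C.sum id
        = ∑ b ∈ B, ((if b ∈ A then (1:F) else 0) + (if b ∈ C then 1 else 0)) • b := by
    intro A C hA hC
    simp only [add_smul, Finset.sum_add_distrib, sum_eq_indic B A hA, sum_eq_indic B C hC]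
  have cond_iff : ∀ A₁ A₂ A₃ A₄ : Finset V, A₁ ⊆ B → A₂ ⊆ B → A₃ ⊆ B → A₄ ⊆ B →
      ((A₁.sum id + A₂.sum id = A₃.sum id + A₄.sum id) ↔
        ∀ b ∈ B, (if b ∈ A₁ then (1:ℕ) else 0) + (if b ∈ A₂ then 1 else 0)
          = (if b ∈ A₃ then 1 else 0) + (if b ∈ A₄ then 1 else 0)) := by
    intro A₁ A₂ A₃ A₄ h₁ h₂ h₃ h₄
    constructor
    · intro h b hb
      have hc := coeff_eq (F := F) hB
        (f := fun b => (if b ∈ A₁ then (1:F) else 0) + (if b ∈ A₂ then 1 else 0))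
        (g := fun b => (if b ∈ A₃ then (1:F) else 0) + (if b ∈ A₄ then 1 else 0))
        (by rw [← sum_pair A₁ A₂ h₁ h₂, ← sum_pair A₃ A₄ h₃ h₄, h]) b hb
      exact (key_char h2 _ _ _ _).mp hc
    · intro h
      rw [sum_pair A₁ A₂ h₁ h₂, sum_pair A₃ A₄ h₃ h₄]
      refine Finset.sum_congr rfl fun b hb => ?_
      congr 1
      exact (key_char h2 _ _ _ _).mpr (h b hb)
  have boolext : ∀ a b : Bool, (a = true ↔ b = true) → a = b := by decide
  have prodext : ∀ u v : Bool × Bool × Bool × Bool,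
      u.1 = v.1 → u.2.1 = v.2.1 → u.2.2.1 = v.2.2.1 → u.2.2.2 = v.2.2.2 → u = v := by
    intro u v; cases u; cases v; simp_all [Prod.ext_iff]
  rw [show (6:ℕ) ^ B.card = (B.pi fun _ => T6).card by
    rw [Finset.card_pi]; simp [T6_card]]
  unfold addQuadruples subsetSums
  symm
  refine Finset.card_bij (fun f _ =>
    (((sel k₁ f).sum id, (sel k₂ f).sum id),
     ((sel k₃ f).sum id, (sel k₄ f).sum id))) ?_ ?_ ?_
  · intro f hf
    rw [Finset.mem_filter]
    constructor
    · simp only [Finset.mem_product]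
      exact ⟨⟨Finset.mem_image_of_mem _ (Finset.mem_powerset.mpr (sel_sub k₁ f)),
        Finset.mem_image_of_mem _ (Finset.mem_powerset.mpr (sel_sub k₂ f))⟩,
        Finset.mem_image_of_mem _ (Finset.mem_powerset.mpr (sel_sub k₃ f)),
        Finset.mem_image_of_mem _ (Finset.mem_powerset.mpr (sel_sub k₄ f))⟩
    · show (sel k₁ f).sum id + (sel k₂ f).sum id = (sel k₃ f).sum id + (sel k₄ f).sum id
      refine (cond_iff _ _ _ _ (sel_sub k₁ f) (sel_sub k₂ f) (sel_sub k₃ f) (sel_sub k₄ f)).mpr ?_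
      intro b hb
      rw [sel_indN k₁ f b hb, sel_indN k₂ f b hb, sel_indN k₃ f b hb, sel_indN k₄ f b hb]
      have := Finset.mem_pi.mp hf b hb
      simpa [T6] using this
  · intro f₁ hf₁ f₂ hf₂ h
    simp only [Prod.mk.injEq] at h
    obtain ⟨⟨e1, e2⟩, e3, e4⟩ := h
    have s1 := sum_injOn (F := F) hB (sel_sub k₁ f₁) (sel_sub k₁ f₂) e1
    have s2 := sum_injOn (F := F) hB (sel_sub k₂ f₁) (sel_sub k₂ f₂) e2
    have s3 := sum_injOn (F := F) hB (sel_sub k₃ f₁) (sel_sub k₃ f₂) e3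
    have s4 := sum_injOn (F := F) hB (sel_sub k₄ f₁) (sel_sub k₄ f₂) e4
    funext a ha
    have key : ∀ (k : Bool × Bool × Bool × Bool → Bool),
        sel k f₁ = sel k f₂ → k (f₁ a ha) = k (f₂ a ha) := by
      intro k hk
      refine boolext _ _ ?_
      constructor
      · intro h
        obtain ⟨hb, hk'⟩ := (sel_mem k f₂ a).mp (hk ▸ (sel_mem k f₁ a).mpr ⟨ha, h⟩)
        exact hk'
      · intro h
        obtain ⟨hb, hk'⟩ := (sel_mem k f₁ a).mp (hk ▸ (sel_mem k f₂ a).mpr ⟨ha, h⟩)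
        exact hk'
    exact prodext _ _ (key k₁ s1) (key k₂ s2) (key k₃ s3) (key k₄ s4)
  · rintro ⟨⟨x1, x2⟩, x3, x4⟩ hq
    rw [Finset.mem_filter] at hq
    obtain ⟨hmem, hcond⟩ := hq
    simp only [Finset.mem_product] at hmem
    obtain ⟨⟨hm1, hm2⟩, hm3, hm4⟩ := hmem
    simp only [Finset.mem_image, Finset.mem_powerset] at hm1 hm2 hm3 hm4
    obtain ⟨A₁, hA₁, hs₁⟩ := hm1
    obtain ⟨A₂, hA₂, hs₂⟩ := hm2
    obtain ⟨A₃, hA₃, hs₃⟩ := hm3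
    obtain ⟨A₄, hA₄, hs₄⟩ := hm4
    have hcond' : ∀ b ∈ B, (if b ∈ A₁ then (1:ℕ) else 0) + (if b ∈ A₂ then 1 else 0)
        = (if b ∈ A₃ then 1 else 0) + (if b ∈ A₄ then 1 else 0) :=
      (cond_iff A₁ A₂ A₃ A₄ hA₁ hA₂ hA₃ hA₄).mp
        (by rw [hs₁, hs₂, hs₃, hs₄]; exact hcond)
    set f : ∀ a ∈ B, Bool × Bool × Bool × Bool :=
      fun b _ => (decide (b ∈ A₁), decide (b ∈ A₂), decide (b ∈ A₃), decide (b ∈ A₄)) with hf_def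
    have selA : ∀ (k : Bool × Bool × Bool × Bool → Bool) (A : Finset V), A ⊆ B →
        (∀ b (hb : b ∈ B), k (f b hb) = decide (b ∈ A)) → sel k f = A := by
      intro k A hA hkA
      ext b
      rw [sel_mem]
      constructor
      · rintro ⟨hb, hk⟩
        rw [hkA b hb] at hk
        exact of_decide_eq_true hk
      · intro hbA
        exact ⟨hA hbA, by rw [hkA b (hA hbA)]; exact decide_eq_true hbA⟩
    refine ⟨f, ?_, ?_⟩
    · rw [Finset.mem_pi]
      intro b hb
      simp only [T6, Finset.mem_filter, Finset.mem_univ, true_and, hf_def, decide_eq_true_eq]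
      simpa using hcond' b hb
    · show (((sel k₁ f).sum id, (sel k₂ f).sum id), (sel k₃ f).sum id, (sel k₄ f).sum id)
          = ((x1, x2), x3, x4)
      simp only [Prod.mk.injEq]
      exact ⟨⟨by rw [selA k₁ A₁ hA₁ (fun b hb => rfl)]; exact hs₁,
              by rw [selA k₂ A₂ hA₂ (fun b hb => rfl)]; exact hs₂⟩,
             by rw [selA k₃ A₃ hA₃ (fun b hb => rfl)]; exact hs₃,
             by rw [selA k₄ A₄ hA₄ (fun b hb => rfl)]; exact hs₄⟩
end

section
/- Let z be an element of a vector space over a field of characteristic 0 or odd characteristic, let B = {b₁,…,b_n} be linearly independent, and suppose z = ε₁b₁ + ⋯ + ε_n b_n with ε_i ∈ {−1, 0, 1}. Then the number of representations of z as a difference b′ − b″ with b′, b″ ∈ B* equals 2^{n − |ε₁| − ⋯ − |ε_n|}. -/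
open Finset Pointwise

theorem stmt12 {F V : Type*} [Field F] (hF : ringChar F ≠ 2)
    [AddCommGroup V] [Module F V] [DecidableEq V]
    (n : ℕ) (b : Fin n → V) (hb : LinearIndependent F b)
    (ε : Fin n → ℤ) (hε : ∀ i, ε i = -1 ∨ ε i = 0 ∨ ε i = 1)
    (z : V) (hz : z = ∑ i, ε i • b i)
    (S : Finset V) (hS : S = subsetSums ((Finset.univ : Finset (Fin n)).image b)) :
    ((S ×ˢ S).filter fun p => z = p.1 - p.2).card = 2 ^ (n - ∑ i, (ε i).natAbs) := by
  classical
  have binj : Function.Injective b := hb.injective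
  have htwo : (2 : F) ≠ 0 := Ring.two_ne_zero hF
  -- membership in S
  have hmem : ∀ v, v ∈ S ↔ ∃ T : Finset (Fin n), v = ∑ i ∈ T, b i := by
    intro v
    subst hS
    simp only [subsetSums, mem_image, mem_powerset]
    constructor
    · rintro ⟨A, hA, rfl⟩
      refine ⟨univ.filter (fun i => b i ∈ A), ?_⟩
      have himg : (univ.filter (fun i => b i ∈ A)).image b = A := by
        apply Finset.Subset.antisymm
        · intro a ha
          simp only [mem_image, mem_filter, mem_univ, true_and] at ha
          obtain ⟨i, hi, rfl⟩ := ha; exact hi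
        · intro a ha
          obtain ⟨i, -, rfl⟩ := mem_image.mp (hA ha)
          exact mem_image.mpr ⟨i, mem_filter.mpr ⟨mem_univ i, ha⟩, rfl⟩
      conv_lhs => rw [← himg]
      rw [Finset.sum_image (fun x _ y _ h => binj h)]
      rfl
    · rintro ⟨T, rfl⟩
      refine ⟨T.image b, Finset.image_subset_image (subset_univ T), ?_⟩
      rw [Finset.sum_image (fun x _ y _ h => binj h)]
      simp
  -- small integer casts are injective
  have hcast : ∀ a c : ℤ, a.natAbs ≤ 1 → c.natAbs ≤ 1 → ((a : F) = c) → a = c := by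
    intro a c ha hc h
    have ha' : -1 ≤ a ∧ a ≤ 1 := by omega
    have hc' : -1 ≤ c ∧ c ≤ 1 := by omega
    obtain ⟨ha1, ha2⟩ := ha'; obtain ⟨hc1, hc2⟩ := hc'
    interval_cases a <;> interval_cases c <;> simp_all <;>
      first
      | rfl
      | (exfalso; apply htwo; linear_combination h)
      | (exfalso; apply htwo; linear_combination -h)
      | (exfalso; exact one_ne_zero (α := F) (by linear_combination h))
      | (exfalso; exact one_ne_zero (α := F) (by linear_combination -h))
  -- key coefficient characterization
  have key : ∀ T1 T2 : Finset (Fin n),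
      ((∑ i ∈ T1, b i) - ∑ i ∈ T2, b i = z) ↔
      ∀ i, (if i ∈ T1 then (1:ℤ) else 0) - (if i ∈ T2 then 1 else 0) = ε i := by
    intro T1 T2
    have hsum : ∀ T : Finset (Fin n),
        (∑ i, (if i ∈ T then (1:F) else 0) • b i) = ∑ i ∈ T, b i := by
      intro T
      have hpt : ∀ i, (if i ∈ T then (1:F) else 0) • b i = if i ∈ T then b i else 0 := by
        intro i; split <;> simp
      simp_rw [hpt]
      rw [Finset.sum_ite_mem, Finset.univ_inter]
    constructor
    · intro h i
      set c : Fin n → F := fun i =>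
        (if i ∈ T1 then (1:F) else 0) - (if i ∈ T2 then 1 else 0) - (ε i : F) with hc
      have hczero : ∑ i, c i • b i = 0 := by
        have : ∑ i, c i • b i
            = (∑ i ∈ T1, b i) - (∑ i ∈ T2, b i) - ∑ i, ε i • b i := by
          rw [← hsum T1, ← hsum T2]
          rw [← Finset.sum_sub_distrib, ← Finset.sum_sub_distrib]
          congr 1; ext i
          rw [hc]
          rw [sub_smul, sub_smul, Int.cast_smul_eq_zsmul]
        rw [this, ← hz, h, sub_self]
      have h0 := Fintype.linearIndependent_iff.mp hb c hczero i
      have this : ((if i ∈ T1 then (1:F) else 0) - if i ∈ T2 then 1 else 0) - (ε i : F) = 0 := h0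
      have hci : (((if i ∈ T1 then (1:ℤ) else 0) - if i ∈ T2 then 1 else 0 : ℤ) : F)
          = ((ε i : ℤ) : F) := by
        push_cast
        split_ifs at this ⊢ <;> linear_combination this
      refine hcast _ _ ?_ ?_ hci
      · split_ifs <;> simp
      · rcases hε i with h' | h' | h' <;> simp [h']
    · intro h
      rw [hz]
      have : ∀ i, ε i • b i = (if i ∈ T1 then b i else 0) - (if i ∈ T2 then b i else 0) := by
        intro i
        rw [← h i, sub_zsmul]
        by_cases h1 : i ∈ T1 <;> by_cases h2 : i ∈ T2 <;> simp [h1, h2, sub_eq_add_neg]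
      rw [Finset.sum_congr rfl (fun i _ => this i), Finset.sum_sub_distrib,
        Finset.sum_ite_mem, Finset.sum_ite_mem, Finset.univ_inter, Finset.univ_inter]
  -- sums over distinct subsets are distinct
  have sum_inj : ∀ T1 T2 : Finset (Fin n), (∑ i ∈ T1, b i) = ∑ i ∈ T2, b i → T1 = T2 := by
    intro T1 T2 h
    set c : Fin n → F := fun i => (if i ∈ T1 then (1:F) else 0) - (if i ∈ T2 then 1 else 0)
      with hc
    have hczero : ∑ i, c i • b i = 0 := by
      have hsum : ∀ T : Finset (Fin n),
          (∑ i, (if i ∈ T then (1:F) else 0) • b i) = ∑ i ∈ T, b i := by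
        intro T
        have hpt : ∀ i, (if i ∈ T then (1:F) else 0) • b i = if i ∈ T then b i else 0 := by
          intro i; split <;> simp
        simp_rw [hpt]
        rw [Finset.sum_ite_mem, Finset.univ_inter]
      have : ∑ i, c i • b i = (∑ i ∈ T1, b i) - (∑ i ∈ T2, b i) := by
        rw [← hsum T1, ← hsum T2, ← Finset.sum_sub_distrib]
        congr 1; ext i; rw [hc, sub_smul]
      rw [this, h, sub_self]
    ext i
    have h0 := Fintype.linearIndependent_iff.mp hb c hczero i
    have this : ((if i ∈ T1 then (1:F) else 0) - if i ∈ T2 then 1 else 0) = 0 := h0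
    by_cases h1 : i ∈ T1 <;> by_cases h2 : i ∈ T2 <;> simp [h1, h2] at this ⊢
  set Pp := univ.filter (fun i => ε i = 1) with hPp
  set Mm := univ.filter (fun i => ε i = -1) with hMm
  set Zz := univ.filter (fun i => ε i = 0) with hZz
  -- the exponent
  have hexp : n - ∑ i, (ε i).natAbs = Zz.card := by
    have h1 : ∑ i, (ε i).natAbs = (univ.filter (fun i => ¬ ε i = 0)).card := by
      rw [Finset.card_filter]
      apply Finset.sum_congr rfl
      intro i _
      rcases hε i with h' | h' | h' <;> simp [h']
    have h2 := Finset.card_filter_add_card_filter_not (s := (univ : Finset (Fin n)))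
      (fun i => ε i = 0)
    rw [h1, hZz]
    simp only [Finset.card_univ, Fintype.card_fin] at h2
    omega
  rw [hexp, ← Finset.card_powerset]
  -- the bijection
  refine (Finset.card_bij
    (fun C _ => ((∑ i ∈ Pp ∪ C, b i, ∑ i ∈ Mm ∪ C, b i) : V × V)) ?_ ?_ ?_).symm
  · intro C hC
    rw [Finset.mem_powerset] at hC
    rw [Finset.mem_filter, Finset.mem_product]
    refine ⟨⟨(hmem _).mpr ⟨_, rfl⟩, (hmem _).mpr ⟨_, rfl⟩⟩, ?_⟩
    refine ((key _ _).mpr ?_).symm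
    intro i
    have hCi : i ∈ C → ε i = 0 := by intro h; have := hC h; simp [hZz] at this; exact this
    have hiP : i ∈ Pp ∪ C ↔ (ε i = 1 ∨ i ∈ C) := by simp [hPp, mem_union]
    have hiM : i ∈ Mm ∪ C ↔ (ε i = -1 ∨ i ∈ C) := by simp [hMm, mem_union]
    simp only [hiP, hiM]
    by_cases hiC : i ∈ C
    · have h0 := hCi hiC
      simp [hiC, h0]
    · rcases hε i with h' | h' | h' <;> simp [h', hiC]
  · intro C1 h1 C2 h2 heq
    rw [Finset.mem_powerset] at h1 h2
    have := sum_inj _ _ (congrArg Prod.fst heq)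
    ext i
    constructor
    · intro hi
      have hiP : i ∉ Pp := by
        have := h1 hi; simp [hZz] at this; simp [hPp, this]
      have : i ∈ Pp ∪ C2 := by rw [← this]; exact Finset.mem_union_right _ hi
      rcases Finset.mem_union.mp this with h | h
      · exact absurd h hiP
      · exact h
    · intro hi
      have hiP : i ∉ Pp := by
        have := h2 hi; simp [hZz] at this; simp [hPp, this]
      have : i ∈ Pp ∪ C1 := by rw [this]; exact Finset.mem_union_right _ hi
      rcases Finset.mem_union.mp this with h | h
      · exact absurd h hiP
      · exact h
  · rintro ⟨p1, p2⟩ hp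
    rw [Finset.mem_filter, Finset.mem_product] at hp
    obtain ⟨⟨hp1, hp2⟩, hpz⟩ := hp
    obtain ⟨T1, rfl⟩ := (hmem _).mp hp1
    obtain ⟨T2, rfl⟩ := (hmem _).mp hp2
    have hcoef := (key T1 T2).mp hpz.symm
    refine ⟨T1 ∩ Zz, Finset.mem_powerset.mpr (Finset.inter_subset_right), ?_⟩
    have hT1 : Pp ∪ T1 ∩ Zz = T1 := by
      ext i
      have h := hcoef i
      simp only [mem_union, mem_inter, hPp, hZz, mem_filter, mem_univ, true_and]
      by_cases h1 : i ∈ T1 <;> by_cases h2 : i ∈ T2 <;>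
        simp only [h1, h2, if_true, if_false] at h <;> simp [h1, h2] <;> omega
    have hT2 : Mm ∪ T1 ∩ Zz = T2 := by
      ext i
      have h := hcoef i
      simp only [mem_union, mem_inter, hMm, hZz, mem_filter, mem_univ, true_and]
      by_cases h1 : i ∈ T1 <;> by_cases h2 : i ∈ T2 <;>
        simp only [h1, h2, if_true, if_false] at h <;> simp [h1, h2] <;> omega
    show (∑ i ∈ Pp ∪ T1 ∩ Zz, b i, ∑ i ∈ Mm ∪ T1 ∩ Zz, b i) = _
    rw [hT1, hT2]
end

section
/- If B₁ and B₂ are finite subsets of a vector space V over a field of characteristic 0 or odd characteristic, then |B₁* + B₂*| ≥ (8/3)^{(rk(B₁) + rk(B₂))/2}. -/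
open Finset Pointwise

/-!
Replace each `Bᵢ` by a basis `Tᵢ ⊆ Bᵢ` of its span; this only shrinks `B₁* + B₂*`. Adjoining
to an independent set `T` a vector `a` outside its span turns `T*` into the direct sum
`T* ⊕ {0, a}`. Cardinality and additive energy are multiplicative along direct sums, and
`E({0, a}) = 6` because `0, a, 2a` are distinct (this is where `char F ≠ 2` enters), so
`|T*| = 2^|T|` and `E(T*) = 6^|T|`. Cauchy–Schwarz gives
`|A|²|B|² ≤ |A + B| E(A, B) ≤ |A + B| √(E(A) E(B))`, hence
`|T₁* + T₂*| ≥ 4^(r₁+r₂) / 6^((r₁+r₂)/2) = (8/3)^((r₁+r₂)/2)`.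
-/

open scoped Combinatorics.Additive

lemma AddSubgroup.add_eq_add_iff_of_disjoint {G : Type*} [AddCommGroup G]
    {U W : AddSubgroup G} (h : Disjoint U W) {a a' b b' : G} (ha : a ∈ U) (ha' : a' ∈ U)
    (hb : b ∈ W) (hb' : b' ∈ W) :
    a + b = a' + b' ↔ a = a' ∧ b = b' := by
  refine ⟨fun hab => ?_, fun ⟨rfl, rfl⟩ => rfl⟩
  have hdiff : a - a' = b' - b := by rw [sub_eq_sub_iff_add_eq_add, hab, add_comm]
  have h0 : a - a' = 0 :=
    AddSubgroup.disjoint_def.1 h (U.sub_mem ha ha') (hdiff ▸ W.sub_mem hb' hb)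
  rw [sub_eq_zero] at h0
  subst h0
  exact ⟨rfl, add_left_cancel hab⟩

namespace Finset

variable {G : Type*} [AddCommGroup G] [DecidableEq G]

def diffCount (s : Finset G) (x : G) : ℕ := #{p ∈ s ×ˢ s | p.1 - p.2 = x}

lemma addEnergy_eq_sum_diffCount_mul {s t u : Finset G} (hu : s - s ⊆ u) :
    E[s, t] = ∑ x ∈ u, diffCount s x * diffCount t x := by
  rw [addEnergy, card_eq_sum_card_fiberwise (f := fun q => q.1.1 - q.1.2) (t := u)]
  · refine sum_congr rfl fun x _ => ?_
    have hswap : #{p ∈ t ×ˢ t | p.2 - p.1 = x} = diffCount t x :=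
      card_equiv (Equiv.prodComm _ _) (by simp [and_comm])
    rw [diffCount, ← hswap, ← card_product, filter_filter, ← filter_product]
    congr 1
    refine filter_congr fun ⟨⟨a₁, a₂⟩, b₁, b₂⟩ _ => ?_
    have h : a₁ - a₂ = b₂ - b₁ ↔ a₁ + b₁ = a₂ + b₂ := by
      rw [sub_eq_sub_iff_add_eq_add, add_comm b₂]
    constructor
    · rintro ⟨hab, rfl⟩
      exact ⟨rfl, (h.2 hab).symm⟩
    · rintro ⟨rfl, hb⟩
      exact ⟨h.1 hb.symm, rfl⟩
  · intro q hq
    simp only [coe_filter, mem_product, Set.mem_ofPred_eq] at hq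
    exact hu (sub_mem_sub hq.1.1.1 hq.1.1.2)

lemma addEnergy_sq_le_mul (s t : Finset G) : E[s, t] ^ 2 ≤ E[s] * E[t] := by
  have hs : s - s ⊆ (s - s) ∪ (t - t) := subset_union_left
  have ht : t - t ⊆ (s - s) ∪ (t - t) := subset_union_right
  rw [addEnergy_eq_sum_diffCount_mul hs, addEnergy_eq_sum_diffCount_mul hs,
    addEnergy_eq_sum_diffCount_mul ht]
  simpa only [← sq] using sum_mul_sq_le_sq_mul_sq _ (diffCount s) (diffCount t)

lemma le_card_add_sq_mul_addEnergy_mul (s t : Finset G) :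
    (#s ^ 2 * #t ^ 2) ^ 2 ≤ #(s + t) ^ 2 * (E[s] * E[t]) :=
  calc (#s ^ 2 * #t ^ 2) ^ 2 ≤ (#(s + t) * E[s, t]) ^ 2 :=
        Nat.pow_le_pow_left (le_card_add_mul_addEnergy s t) 2
    _ ≤ #(s + t) ^ 2 * (E[s] * E[t]) := by
        rw [mul_pow]; gcongr; exact addEnergy_sq_le_mul s t

section DisjointSubgroups

variable {U W : AddSubgroup G} {A B : Finset G}

lemma card_add_of_disjoint (hA : (A : Set G) ⊆ U) (hB : (B : Set G) ⊆ W) (h : Disjoint U W) :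
    #(A + B) = #A * #B :=
  card_add_iff.2 fun p hp q hq hpq => by
    simp only [Set.mem_prod, mem_coe] at hp hq
    exact Prod.ext_iff.2 <| (AddSubgroup.add_eq_add_iff_of_disjoint h (hA hp.1) (hA hq.1)
      (hB hp.2) (hB hq.2)).1 hpq

lemma addEnergy_add_of_disjoint (hA : (A : Set G) ⊆ U) (hB : (B : Set G) ⊆ W)
    (h : Disjoint U W) : E[A + B] = E[A] * E[B] := by
  have unique {a a' b b' : G} (ha : a ∈ A) (ha' : a' ∈ A) (hb : b ∈ B) (hb' : b' ∈ B) :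
      a + b = a' + b' ↔ a = a' ∧ b = b' :=
    AddSubgroup.add_eq_add_iff_of_disjoint h (hA ha) (hA ha') (hB hb) (hB hb')
  have split {a₁ a₂ a₃ a₄ b₁ b₂ b₃ b₄ : G} (ha₁ : a₁ ∈ A) (ha₂ : a₂ ∈ A) (ha₃ : a₃ ∈ A)
      (ha₄ : a₄ ∈ A) (hb₁ : b₁ ∈ B) (hb₂ : b₂ ∈ B) (hb₃ : b₃ ∈ B) (hb₄ : b₄ ∈ B) :
      (a₁ + b₁) + (a₃ + b₃) = (a₂ + b₂) + (a₄ + b₄) ↔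
        a₁ + a₃ = a₂ + a₄ ∧ b₁ + b₃ = b₂ + b₄ := by
    rw [add_add_add_comm, add_add_add_comm a₂]
    exact AddSubgroup.add_eq_add_iff_of_disjoint h (U.add_mem (hA ha₁) (hA ha₃))
      (U.add_mem (hA ha₂) (hA ha₄)) (W.add_mem (hB hb₁) (hB hb₃)) (W.add_mem (hB hb₂) (hB hb₄))
  -- an additive quadruple in `A + B` splits uniquely into one in `A` and one in `B`
  rw [addEnergy, addEnergy, addEnergy, ← card_product]
  symm
  refine card_bij (fun p _ => ((p.1.1.1 + p.2.1.1, p.1.1.2 + p.2.1.2),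
    p.1.2.1 + p.2.2.1, p.1.2.2 + p.2.2.2)) ?_ ?_ ?_
  · rintro ⟨⟨⟨a₁, a₂⟩, a₃, a₄⟩, ⟨b₁, b₂⟩, b₃, b₄⟩ hp
    simp only [mem_product, mem_filter] at hp ⊢
    obtain ⟨⟨⟨⟨ha₁, ha₂⟩, ha₃, ha₄⟩, hsa⟩, ⟨⟨hb₁, hb₂⟩, hb₃, hb₄⟩, hsb⟩ := hp
    exact ⟨⟨⟨add_mem_add ha₁ hb₁, add_mem_add ha₂ hb₂⟩, add_mem_add ha₃ hb₃,
      add_mem_add ha₄ hb₄⟩, (split ha₁ ha₂ ha₃ ha₄ hb₁ hb₂ hb₃ hb₄).2 ⟨hsa, hsb⟩⟩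
  · rintro ⟨⟨⟨a₁, a₂⟩, a₃, a₄⟩, ⟨b₁, b₂⟩, b₃, b₄⟩ hp
      ⟨⟨⟨a₁', a₂'⟩, a₃', a₄'⟩, ⟨b₁', b₂'⟩, b₃', b₄'⟩ hp' he
    simp only [mem_product, mem_filter] at hp hp'
    simp only [Prod.mk.injEq] at he ⊢
    obtain ⟨⟨e₁, e₂⟩, e₃, e₄⟩ := he
    rw [unique hp.1.1.1.1 hp'.1.1.1.1 hp.2.1.1.1 hp'.2.1.1.1] at e₁
    rw [unique hp.1.1.1.2 hp'.1.1.1.2 hp.2.1.1.2 hp'.2.1.1.2] at e₂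
    rw [unique hp.1.1.2.1 hp'.1.1.2.1 hp.2.1.2.1 hp'.2.1.2.1] at e₃
    rw [unique hp.1.1.2.2 hp'.1.1.2.2 hp.2.1.2.2 hp'.2.1.2.2] at e₄
    tauto
  · rintro ⟨⟨x₁, x₂⟩, x₃, x₄⟩ hx
    simp only [mem_product, mem_filter, mem_add] at hx
    obtain ⟨⟨⟨⟨a₁, ha₁, b₁, hb₁, rfl⟩, ⟨a₂, ha₂, b₂, hb₂, rfl⟩⟩, ⟨a₃, ha₃, b₃, hb₃, rfl⟩,
      ⟨a₄, ha₄, b₄, hb₄, rfl⟩⟩, hs⟩ := hx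
    obtain ⟨hsa, hsb⟩ := (split ha₁ ha₂ ha₃ ha₄ hb₁ hb₂ hb₃ hb₄).1 hs
    exact ⟨(((a₁, a₂), a₃, a₄), ((b₁, b₂), b₃, b₄)), by simp [*], rfl⟩

end DisjointSubgroups

lemma addEnergy_pair_zero {a : G} (ha : a + a ≠ 0) : E[{0, a}] = 6 := by
  have ha0 : a ≠ 0 := by rintro rfl; simp at ha
  have hfilter : {x ∈ ({0, a} ×ˢ {0, a}) ×ˢ ({0, a} : Finset G) ×ˢ {0, a} |
      x.1.1 + x.2.1 = x.1.2 + x.2.2} =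
      {((0, 0), 0, 0), ((a, a), 0, 0), ((0, 0), a, a), ((a, a), a, a), ((a, 0), 0, a),
        ((0, a), a, 0)} := by
    ext ⟨⟨x₁, x₂⟩, y₁, y₂⟩
    simp only [mem_filter, mem_product, mem_insert, mem_singleton, Prod.mk.injEq]
    constructor
    · rintro ⟨⟨⟨rfl | rfl, rfl | rfl⟩, rfl | rfl, rfl | rfl⟩, h⟩ <;> simp_all [eq_comm]
    · rintro (h | h | h | h | h | h) <;> simp [h]
  rw [addEnergy, hfilter]
  simp [ha0, ha0.symm]

end Finset

section SubsetSums

variable {V : Type*} [AddCommMonoid V] [DecidableEq V] {s t : Finset V} {a : V}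

lemma subsetSums_mono (h : s ⊆ t) : subsetSums s ⊆ subsetSums t :=
  image_subset_image (powerset_mono.2 h)

lemma subsetSums_insert (ha : a ∉ s) : subsetSums (insert a s) = subsetSums s + {0, a} := by
  ext x
  simp only [subsetSums, powerset_insert, image_union, image_image, mem_union, mem_add,
    mem_image, mem_insert, mem_singleton, mem_powerset]
  constructor
  · rintro (⟨A, hA, rfl⟩ | ⟨A, hA, rfl⟩)
    · exact ⟨_, ⟨A, hA, rfl⟩, 0, Or.inl rfl, add_zero _⟩
    · refine ⟨_, ⟨A, hA, rfl⟩, a, Or.inr rfl, ?_⟩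
      simp [sum_insert (fun h => ha (hA h)), add_comm]
  · rintro ⟨_, ⟨A, hA, rfl⟩, _, rfl | rfl, rfl⟩
    · exact Or.inl ⟨A, hA, (add_zero _).symm⟩
    · refine Or.inr ⟨A, hA, ?_⟩
      simp [sum_insert (fun h => ha (hA h)), add_comm]

lemma coe_subsetSums_subset_span (R : Type*) [Semiring R] [Module R V] (s : Finset V) :
    (subsetSums s : Set V) ⊆ Submodule.span R (s : Set V) := by
  simp only [subsetSums, coe_image, Set.image_subset_iff]
  intro A hA
  exact Submodule.sum_mem _ fun x hx => Submodule.subset_span (mem_powerset.1 hA hx)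

end SubsetSums

lemma Submodule.disjoint_toAddSubgroup {R M : Type*} [Ring R] [AddCommGroup M] [Module R M]
    {p q : Submodule R M} (h : Disjoint p q) : Disjoint p.toAddSubgroup q.toAddSubgroup :=
  AddSubgroup.disjoint_def.2 fun hx hy => Submodule.disjoint_def.1 h _ hx hy

lemma exists_subset_linearIndepOn_card_eq_finrank (F : Type*) {V : Type*} [Field F]
    [AddCommGroup V] [Module F V] (B : Finset V) :
    ∃ T ⊆ B, LinearIndepOn F id (T : Set V) ∧
      #T = Module.finrank F (Submodule.span F (B : Set V)) := by
  obtain ⟨t, htB, hspan, ht⟩ := exists_linearIndependent F (B : Set V)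
  obtain ⟨T, rfl⟩ := (B.finite_toSet.subset htB).exists_finset_coe
  exact ⟨T, coe_subset.1 htB, ht, by rw [← hspan, finrank_span_finset_eq_card ht]⟩

section LinearIndependent

variable {F V : Type*} [Field F] [AddCommGroup V] [Module F V] [DecidableEq V]

lemma coe_pair_zero_subset_span_singleton (a : V) :
    ((({0, a} : Finset V)) : Set V) ⊆ (F ∙ a).toAddSubgroup := by
  simp [Set.insert_subset_iff]

lemma card_subsetSums_of_linearIndepOn {T : Finset V} (hT : LinearIndepOn F id (T : Set V)) :
    #(subsetSums T) = 2 ^ #T := by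
  induction T using Finset.induction_on with
  | empty => simp [subsetSums]
  | @insert a s ha ih =>
    rw [coe_insert, linearIndepOn_id_insert (mem_coe.not.2 ha)] at hT
    obtain ⟨hs, has⟩ := hT
    have ha0 : a ≠ 0 := fun h0 => has (h0 ▸ zero_mem _)
    have hdisj :=
      Submodule.disjoint_toAddSubgroup (Submodule.disjoint_span_singleton_of_notMem has)
    rw [subsetSums_insert ha, card_add_of_disjoint (coe_subsetSums_subset_span F s)
      (coe_pair_zero_subset_span_singleton a) hdisj, ih hs, card_pair ha0.symm,
      card_insert_of_notMem ha, pow_succ]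

lemma addEnergy_subsetSums_of_linearIndepOn (h2 : (2 : F) ≠ 0) {T : Finset V}
    (hT : LinearIndepOn F id (T : Set V)) : E[subsetSums T] = 6 ^ #T := by
  induction T using Finset.induction_on with
  | empty => simp [subsetSums, addEnergy, filter_singleton]
  | @insert a s ha ih =>
    rw [coe_insert, linearIndepOn_id_insert (mem_coe.not.2 ha)] at hT
    obtain ⟨hs, has⟩ := hT
    have ha0 : a ≠ 0 := fun h0 => has (h0 ▸ zero_mem _)
    have hdisj :=
      Submodule.disjoint_toAddSubgroup (Submodule.disjoint_span_singleton_of_notMem has)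
    have h2a : a + a ≠ 0 := by rw [← two_smul F a]; exact smul_ne_zero h2 ha0
    rw [subsetSums_insert ha, addEnergy_add_of_disjoint (coe_subsetSums_subset_span F s)
      (coe_pair_zero_subset_span_singleton a) hdisj, ih hs, addEnergy_pair_zero h2a,
      card_insert_of_notMem ha, pow_succ]

end LinearIndependent

lemma rpow_div_two_le_of_pow_le_sq {x y : ℝ} (hx : 0 ≤ x) (hy : 0 ≤ y) {n : ℕ}
    (h : x ^ n ≤ y ^ 2) : x ^ ((n : ℝ) / 2) ≤ y :=
  calc x ^ ((n : ℝ) / 2) = √(x ^ n) := by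
        rw [Real.sqrt_eq_rpow, ← Real.rpow_natCast, ← Real.rpow_mul hx, mul_one_div]
    _ ≤ √(y ^ 2) := Real.sqrt_le_sqrt h
    _ = y := Real.sqrt_sq hy

theorem stmt13 {F V : Type*} [Field F] (hF : ringChar F ≠ 2)
    [AddCommGroup V] [Module F V] [DecidableEq V]
    (B₁ B₂ : Finset V) :
    ((8 : ℝ) / 3) ^ (((Module.finrank F (Submodule.span F ((B₁ : Set V)))
          + Module.finrank F (Submodule.span F ((B₂ : Set V))) : ℕ) : ℝ) / 2)
      ≤ ((subsetSums B₁ + subsetSums B₂).card : ℝ) := by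
  have h2 : (2 : F) ≠ 0 := Ring.two_ne_zero hF
  obtain ⟨T₁, hTB₁, hT₁, hr₁⟩ := exists_subset_linearIndepOn_card_eq_finrank F B₁
  obtain ⟨T₂, hTB₂, hT₂, hr₂⟩ := exists_subset_linearIndepOn_card_eq_finrank F B₂
  rw [← hr₁, ← hr₂]
  set C₁ := subsetSums T₁
  set C₂ := subsetSums T₂
  have key : 16 ^ (#T₁ + #T₂) ≤ #(subsetSums B₁ + subsetSums B₂) ^ 2 * 6 ^ (#T₁ + #T₂) :=
    calc 16 ^ (#T₁ + #T₂) = (#C₁ ^ 2 * #C₂ ^ 2) ^ 2 := by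
          rw [card_subsetSums_of_linearIndepOn hT₁, card_subsetSums_of_linearIndepOn hT₂,
            ← mul_pow, ← pow_add, ← pow_mul, ← pow_mul, mul_comm, pow_mul]
          rfl
      _ ≤ #(C₁ + C₂) ^ 2 * (E[C₁] * E[C₂]) := le_card_add_sq_mul_addEnergy_mul C₁ C₂
      _ ≤ _ := by
          rw [addEnergy_subsetSums_of_linearIndepOn h2 hT₁,
            addEnergy_subsetSums_of_linearIndepOn h2 hT₂, ← pow_add]
          gcongr
          exacts [subsetSums_mono hTB₁, subsetSums_mono hTB₂]
  apply rpow_div_two_le_of_pow_le_sq (by norm_num) (Nat.cast_nonneg _)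
  rw [show (8 : ℝ) / 3 = 16 / 6 by norm_num, div_pow, div_le_iff₀ (by positivity)]
  exact_mod_cast key
end

section
/- Let F be a field of characteristic 3, let V be a 2l-dimensional vector space over F with basis B₁ = {e₁,…,e_{2l}}, and let B₂ = {e₁+e₂, e₁−e₂, e₃+e₄, e₃−e₄, …, e_{2l−1}+e_{2l}, e_{2l−1}−e_{2l}}. Then B₂ is also a basis of V and |B₁* + B₂*| = 8^l. -/
/-!
In coordinates with respect to `e`, every vector of `B₁` and `B₂` lives in a single block
`span {e (i, false), e (i, true)}` and has coefficients in the prime field `𝔽₃ ⊆ F`. Hence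
`B₁* + B₂*` is the image, under an injective additive map `(Fin l → 𝔽₃²) → V`, of the `l`-fold
product of the block set `{0,1}² + {0, (1,1), (1,-1), (2,0)} ⊆ 𝔽₃²`, which has `8` elements.
`B₂` is a basis because `2` is invertible: `2 • e (i, false)` and `2 • e (i, true)` are the sum
and the difference of the two vectors of `B₂` in block `i`.
-/

open Finset Pointwise

section SubsetSums

variable {ι κ M N : Type*} [Fintype ι] [AddCommMonoid M]

theorem subsetSums_image_univ [DecidableEq ι] [DecidableEq M] {f : ι → M}
    (hf : Function.Injective f) :
    subsetSums (univ.image f) = univ.image fun A : Finset ι => ∑ i ∈ A, f i := by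
  ext x
  simp only [subsetSums, mem_image, mem_powerset, mem_univ, true_and, subset_image_iff]
  constructor
  · rintro ⟨_, ⟨A, -, rfl⟩, rfl⟩
    exact ⟨A, (sum_image (f := id) hf.injOn).symm⟩
  · rintro ⟨A, rfl⟩
    exact ⟨A.image f, ⟨A, subset_univ A, rfl⟩, sum_image (f := id) hf.injOn⟩

theorem image_image_sum [DecidableEq M] [AddCommMonoid N] [DecidableEq N] (φ : M →+ N)
    (f : ι → M) :
    (univ.image fun A : Finset ι => ∑ i ∈ A, f i).image φ =
      univ.image fun A : Finset ι => ∑ i ∈ A, φ (f i) := by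
  simp [image_image, Function.comp_def]

variable [DecidableEq ι] [Fintype κ] [DecidableEq κ]

theorem sum_pi_single_prod (g : ι → κ → M) (A : Finset (ι × κ)) :
    ∑ p ∈ A, Pi.single p.1 (g p.1 p.2) =
      fun i => ∑ k ∈ univ.filter (fun k => (i, k) ∈ A), g i k := by
  rw [sum_finset_product A univ (fun i => univ.filter fun k => (i, k) ∈ A) (by simp)]
  ext i
  simp [Finset.sum_apply, Pi.single_apply]

theorem image_sum_pi_single [DecidableEq M] (g : ι → κ → M) :
    (univ.image fun A : Finset (ι × κ) => ∑ p ∈ A, Pi.single p.1 (g p.1 p.2)) =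
      Fintype.piFinset fun i => univ.image fun S : Finset κ => ∑ k ∈ S, g i k := by
  ext x
  simp only [mem_image, mem_univ, true_and, Fintype.mem_piFinset, sum_pi_single_prod]
  constructor
  · rintro ⟨A, rfl⟩ i
    exact ⟨_, rfl⟩
  · intro hx
    choose S hS using hx
    refine ⟨univ.filter fun p => p.2 ∈ S p.1, funext fun i => ?_⟩
    simpa using hS i

end SubsetSums

section SumDiff

variable {ι M N : Type*} [AddCommGroup M] [AddCommGroup N]

def sumDiffPair (u : Bool → M) : Bool → M :=
  fun k => if k then u false + u true else u false - u true

def sumDiffFamily (f : ι × Bool → M) : ι × Bool → M :=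
  fun p => sumDiffPair (fun k => f (p.1, k)) p.2

theorem map_sumDiffFamily (φ : M →+ N) (f : ι × Bool → M) :
    sumDiffFamily (fun p => φ (f p)) = fun p => φ (sumDiffFamily f p) := by
  funext ⟨i, k⟩
  cases k <;> simp [sumDiffFamily, sumDiffPair]

theorem sumDiffFamily_pi_single [DecidableEq ι] (g : ι → Bool → M) :
    sumDiffFamily (fun p => (Pi.single p.1 (g p.1 p.2) : ι → M)) =
      fun p => (Pi.single p.1 (sumDiffPair (g p.1) p.2) : ι → M) := by
  funext ⟨i, k⟩
  cases k <;> simp [sumDiffFamily, sumDiffPair, Pi.single_add, Pi.single_sub]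

variable {F V : Type*} [Field F] [AddCommGroup V] [Module F V]

theorem span_le_span_sumDiffFamily (h2 : (2 : F) ≠ 0) (e : ι × Bool → V) :
    Submodule.span F (Set.range e) ≤ Submodule.span F (Set.range (sumDiffFamily e)) := by
  rw [Submodule.span_le]
  rintro _ ⟨⟨i, k⟩, rfl⟩
  have mem : ∀ k, sumDiffFamily e (i, k) ∈ Submodule.span F (Set.range (sumDiffFamily e)) :=
    fun k => Submodule.subset_span ⟨(i, k), rfl⟩
  have two_smul_eq : (2 : F) • e (i, k) =
      sumDiffFamily e (i, true) + (if k then -1 else 1 : F) • sumDiffFamily e (i, false) := by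
    cases k
    · simp [sumDiffFamily, sumDiffPair, two_smul]
    · simp [sumDiffFamily, sumDiffPair, two_smul]
      abel
  have e_eq : e (i, k) = (2 : F)⁻¹ • (sumDiffFamily e (i, true) +
      (if k then -1 else 1 : F) • sumDiffFamily e (i, false)) := by
    rw [← two_smul_eq, smul_smul, inv_mul_cancel₀ h2, one_smul]
  rw [SetLike.mem_coe, e_eq]
  exact Submodule.smul_mem _ _ (add_mem (mem true) (Submodule.smul_mem _ _ (mem false)))

variable [Fintype ι]

noncomputable def Module.Basis.sumDiff (e : Module.Basis (ι × Bool) F V) (h2 : (2 : F) ≠ 0) :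
    Module.Basis (ι × Bool) F V :=
  basisOfTopLeSpanOfCardEqFinrank (sumDiffFamily e)
    (e.span_eq ▸ span_le_span_sumDiffFamily h2 e) (Module.finrank_eq_card_basis e).symm

@[simp]
theorem Module.Basis.coe_sumDiff (e : Module.Basis (ι × Bool) F V) (h2 : (2 : F) ≠ 0) :
    ⇑(e.sumDiff h2) = sumDiffFamily e :=
  coe_basisOfTopLeSpanOfCardEqFinrank _ _ _

end SumDiff

namespace Module.Basis

variable {ι κ R F V : Type*} [Fintype ι] [Fintype κ] [Ring R] [Field F]
  [AddCommGroup V] [Module F V]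

noncomputable def blockEmbedding (e : Basis (ι × κ) F V) (φ : R →+* F) : (ι → κ → R) →+ V :=
  AddMonoidHom.mk' (fun c => e.equivFun.symm fun p => φ (c p.1 p.2)) fun c d => by
    rw [← map_add]
    simp [Pi.add_def]

theorem blockEmbedding_injective (e : Basis (ι × κ) F V) {φ : R →+* F}
    (hφ : Function.Injective φ) : Function.Injective (e.blockEmbedding φ) := by
  intro c d h
  have h' := e.equivFun.symm.injective h
  funext i k
  exact hφ (congrFun h' (i, k))

theorem blockEmbedding_single [DecidableEq ι] [DecidableEq κ] (e : Basis (ι × κ) F V)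
    (φ : R →+* F) (i : ι) (k : κ) :
    e.blockEmbedding φ (Pi.single i (Pi.single k 1)) = e (i, k) := by
  rw [blockEmbedding, AddMonoidHom.mk'_apply, LinearEquiv.symm_apply_eq]
  funext p
  rw [equivFun_self]
  obtain ⟨j, m⟩ := p
  by_cases hj : i = j <;> by_cases hm : k = m <;> simp [hj, hm]

end Module.Basis

/-- Per block this is all of `𝔽₃²` except `(0, 2)`. -/
def sumDiffBlockSums : Finset (Bool → ZMod 3) :=
  (univ.image fun S : Finset Bool => ∑ k ∈ S, Pi.single k 1) +
    univ.image fun S : Finset Bool => ∑ k ∈ S, sumDiffPair (fun j => Pi.single j 1) k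

theorem card_sumDiffBlockSums : sumDiffBlockSums.card = 8 := by decide

theorem two_ne_zero_of_charP_three (R : Type*) [NonAssocRing R] [Nontrivial R] [CharP R 3] :
    (2 : R) ≠ 0 :=
  Ring.two_ne_zero (by rw [ringChar.eq R 3]; decide)

theorem subsetSums_add_subsetSums_sumDiff {ι F V : Type*} [Fintype ι] [DecidableEq ι] [Field F]
    [CharP F 3] [AddCommGroup V] [Module F V] [DecidableEq V]
    (e : Module.Basis (ι × Bool) F V) :
    subsetSums (univ.image e) + subsetSums (univ.image (sumDiffFamily e)) =
      (Fintype.piFinset fun _ : ι => sumDiffBlockSums).image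
        (e.blockEmbedding (ZMod.castHom dvd_rfl F)) := by
  have h2 := two_ne_zero_of_charP_three F
  set χ := e.blockEmbedding (ZMod.castHom dvd_rfl F)
  have he : ⇑e = fun p => χ (Pi.single p.1 (Pi.single p.2 1)) :=
    funext fun p => (e.blockEmbedding_single _ p.1 p.2).symm
  have hw : sumDiffFamily e =
      fun p => χ (Pi.single p.1 (sumDiffPair (fun j => Pi.single j 1) p.2)) := by
    rw [he, map_sumDiffFamily, sumDiffFamily_pi_single fun _ k => Pi.single k 1]
  rw [subsetSums_image_univ e.injective, ← e.coe_sumDiff h2,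
    subsetSums_image_univ (e.sumDiff h2).injective, e.coe_sumDiff, hw, he, ← image_image_sum,
    ← image_image_sum, ← image_add, image_sum_pi_single fun _ k => Pi.single k 1,
    image_sum_pi_single fun _ k => sumDiffPair (fun j => Pi.single j 1) k, ← Fintype.piFinset_add]
  rfl

theorem stmt14 {F V : Type*} [Field F] [CharP F 3]
    [AddCommGroup V] [Module F V] [DecidableEq V]
    (l : ℕ) (e : Module.Basis (Fin l × Bool) F V)
    (B₁ B₂ : Finset V)
    (hB₁ : B₁ = (Finset.univ : Finset (Fin l × Bool)).image ⇑e)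
    (hB₂ : B₂ = (Finset.univ : Finset (Fin l × Bool)).image fun p =>
      if p.2 then e (p.1, false) + e (p.1, true) else e (p.1, false) - e (p.1, true)) :
    (LinearIndependent F ((↑) : ↥(B₂ : Set V) → V) ∧
        Submodule.span F ((B₂ : Set V)) = ⊤) ∧
      (subsetSums B₁ + subsetSums B₂).card = 8 ^ l := by
  have h2 := two_ne_zero_of_charP_three F
  replace hB₂ : B₂ = univ.image (sumDiffFamily e) := hB₂
  have hB₂_range : (B₂ : Set V) = Set.range (e.sumDiff h2) := by
    rw [hB₂, e.coe_sumDiff, coe_image, coe_univ, Set.image_univ]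
  refine ⟨⟨?_, ?_⟩, ?_⟩
  · rw [hB₂_range]
    exact (e.sumDiff h2).linearIndependent.linearIndepOn_id
  · rw [hB₂_range]
    exact (e.sumDiff h2).span_eq
  · rw [hB₁, hB₂, subsetSums_add_subsetSums_sumDiff e,
      card_image_of_injective _ (e.blockEmbedding_injective (ZMod.castHom dvd_rfl F).injective),
      Fintype.card_piFinset, card_sumDiffBlockSums]
    simp
end
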